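/- arXiv:2312.16259 — 2 statements merged into one kernel-verified Lean document; each statement's English description precedes it below -/
import Mathlib

section
/- For Left dead-ends, birthday is additive: b(G + H) = b(G) + b(H), where b(G) = min over all Left dead-ends K equal to G of the formal birthday of K. -/
/-- A Left dead-end: a partizan game in which no subposition has a Left option,
modeled as a finitely-branching rooted tree of Right options. -/
inductive LDE : Type where
  | node : List LDE → LDE

/-- The (Right) options of a Left dead-end. -/
def LDE.opts : LDE → List LDE
  | .node l => l

/-- The dead-end order: `G ≥ H` iff every Right option of `G` is `≥` some Right
option of `H`, and if `G` has no Right options then neither does `H`. -/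
def LDE.Ge : LDE → LDE → Prop
  | .node gs, .node hs =>
      (∀ g ∈ gs, ∃ h ∈ hs, LDE.Ge g h) ∧ (gs = [] → hs = [])
termination_by G _ => sizeOf G
decreasing_by
  have := List.sizeOf_lt_of_mem ‹g ∈ gs›; simp; omega

/-- Equality (equivalence) in the dead-end order. -/
def LDE.Eqv (G H : LDE) : Prop := LDE.Ge G H ∧ LDE.Ge H G

/-- The formal birthday: the height of the game tree. -/
def LDE.fb : LDE → ℕ
  | .node l => l.attach.foldr (fun g m => max (LDE.fb g.1 + 1) m) 0
termination_by G => sizeOf G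
decreasing_by
  have := List.sizeOf_lt_of_mem g.2; simp; omega

/-- Disjunctive sum of Left dead-ends: the Right options of `G + H` are
`G^R + H` and `G + H^R`. -/
def LDE.add : LDE → LDE → LDE
  | .node gs, .node hs =>
      .node (gs.attach.map (fun g => LDE.add g.1 (.node hs)) ++
             hs.attach.map (fun h => LDE.add (.node gs) h.1))
termination_by g h => sizeOf g + sizeOf h
decreasing_by
  · have := List.sizeOf_lt_of_mem g.2; simp; omega
  · have := List.sizeOf_lt_of_mem h.2; simp; omega

/-- The birthday of `G`: the least formal birthday among all forms of `G`
(Left dead-ends equal to `G` in the dead-end order). -/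
noncomputable def LDE.bday (G : LDE) : ℕ :=
  sInf {n | ∃ K : LDE, LDE.Eqv K G ∧ K.fb = n}

/-!
The formal birthday is antitone in the dead-end order: if `G ≥ H`, each `G^R` is `≥` some `H^R`,
so inductively `fb G^R ≤ fb H^R < fb H`. Hence all forms of `G` have the same formal birthday and `b = fb`. The formal birthday
is additive: every option of `G + H` lowers one summand's height by at least one, and playing a
longest run of `H` followed by a longest run of `G` inside `G + H` attains `fb G + fb H`.
-/

theorem List.foldr_max_le_iff {α : Type*} (f : α → ℕ) (l : List α) (n : ℕ) :
    l.foldr (fun a m => max (f a) m) 0 ≤ n ↔ ∀ a ∈ l, f a ≤ n := by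
  induction l with
  | nil => simp
  | cons a t ih => simp [ih]

namespace LDE

theorem fb_node_le_iff (l : List LDE) (n : ℕ) :
    (node l).fb ≤ n ↔ ∀ g ∈ l, g.fb + 1 ≤ n := by
  rw [fb, List.foldr_max_le_iff]
  exact ⟨fun h g hg => h ⟨g, hg⟩ (List.mem_attach _ _), fun h g _ => h g.1 g.2⟩

theorem fb_lt_fb_node {l : List LDE} {g : LDE} (hg : g ∈ l) : g.fb < (node l).fb :=
  (fb_node_le_iff l _).1 le_rfl g hg

theorem exists_mem_fb_eq_of_fb_node_eq_succ {l : List LDE} {k : ℕ} (h : (node l).fb = k + 1) :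
    ∃ g ∈ l, g.fb = k := by
  have : ¬ (node l).fb ≤ k := by omega
  obtain ⟨g, hg, hgk⟩ : ∃ g ∈ l, k < g.fb + 1 := by simpa [fb_node_le_iff] using this
  exact ⟨g, hg, by have := fb_lt_fb_node hg; omega⟩

theorem ge_refl : ∀ G : LDE, G.Ge G
  | node l => by
    rw [Ge]
    exact ⟨fun g hg => ⟨g, hg, have := List.sizeOf_lt_of_mem hg; ge_refl g⟩, id⟩
termination_by G => sizeOf G
decreasing_by simp; omega

theorem fb_le_fb_of_ge : ∀ {G H : LDE}, G.Ge H → G.fb ≤ H.fb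
  | node gs, node hs, hGH => by
    rw [Ge] at hGH
    rw [fb_node_le_iff]
    intro g hg
    obtain ⟨h, hh, hgh⟩ := hGH.1 g hg
    have := List.sizeOf_lt_of_mem hg
    exact (fb_le_fb_of_ge hgh).trans_lt (fb_lt_fb_node hh)
termination_by G => sizeOf G
decreasing_by simp; omega

theorem fb_eq_of_eqv {G H : LDE} (h : G.Eqv H) : G.fb = H.fb :=
  le_antisymm (fb_le_fb_of_ge h.1) (fb_le_fb_of_ge h.2)

theorem node_add_node (gs hs : List LDE) :
    (node gs).add (node hs) = node (gs.map (·.add (node hs)) ++ hs.map ((node gs).add ·)) := by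
  rw [add]
  simp

theorem fb_add : ∀ G H : LDE, (G.add H).fb = G.fb + H.fb
  | node gs, node hs => by
    rw [node_add_node]
    have left_mem {g} (hg : g ∈ gs) :
        g.add (node hs) ∈ gs.map (·.add (node hs)) ++ hs.map ((node gs).add ·) :=
      List.mem_append_left _ (List.mem_map_of_mem hg)
    have right_mem {h} (hh : h ∈ hs) :
        (node gs).add h ∈ gs.map (·.add (node hs)) ++ hs.map ((node gs).add ·) :=
      List.mem_append_right _ (List.mem_map_of_mem hh)
    apply le_antisymm
    · rw [fb_node_le_iff]
      intro _ hmem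
      simp only [List.mem_append, List.mem_map] at hmem
      rcases hmem with ⟨g, hg, rfl⟩ | ⟨h, hh, rfl⟩
      · have := List.sizeOf_lt_of_mem hg
        have := fb_lt_fb_node hg
        rw [fb_add g (node hs)]
        omega
      · have := List.sizeOf_lt_of_mem hh
        have := fb_lt_fb_node hh
        rw [fb_add (node gs) h]
        omega
    · rcases hH : (node hs).fb with _ | k
      · rcases hG : (node gs).fb with _ | k
        · exact Nat.zero_le _
        · obtain ⟨g, hg, rfl⟩ := exists_mem_fb_eq_of_fb_node_eq_succ hG
          have := List.sizeOf_lt_of_mem hg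
          have := fb_lt_fb_node (left_mem hg)
          rw [fb_add g (node hs), hH] at this
          omega
      · obtain ⟨h, hh, rfl⟩ := exists_mem_fb_eq_of_fb_node_eq_succ hH
        have := List.sizeOf_lt_of_mem hh
        have := fb_lt_fb_node (right_mem hh)
        rw [fb_add (node gs) h] at this
        omega
termination_by G H => sizeOf G + sizeOf H
decreasing_by all_goals simp; omega

theorem bday_eq_fb (G : LDE) : G.bday = G.fb := by
  have : {n | ∃ K : LDE, K.Eqv G ∧ K.fb = n} = {G.fb} := by
    ext n
    constructor
    · rintro ⟨K, hKG, rfl⟩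
      exact fb_eq_of_eqv hKG
    · rintro rfl
      exact ⟨G, ⟨ge_refl G, ge_refl G⟩, rfl⟩
  rw [bday, this, csInf_singleton]

end LDE

/-- birthday is additive on Left dead-ends. -/
theorem stmt9 (G H : LDE) : (G.add H).bday = G.bday + H.bday := by
  rw [LDE.bday_eq_fb, LDE.bday_eq_fb, LDE.bday_eq_fb, LDE.fb_add]
end

section
/- For each n ≥ 1, the partially ordered set L_n* consisting of the equivalence classes of nonzero Left dead-ends of birthday at most n, together with an adjoined top element ∇ greater than all of them, is a distributive lattice, where the meet of two nonzero dead-ends G and H is the game whose Right options are the union of the Right options of G and H. -/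
/-- A realization of `L_n*` (the nonzero Left dead-ends of birthday at most `n`
up to equivalence, with an adjoined top element `∇`) as a distributive lattice
in which meet is given by union of Right-option sets. -/
structure DistribLatticeRealization (n : ℕ) where
  carrier : Type
  [lat : DistribLattice carrier]
  /-- the adjoined top element `∇` -/
  nabla : carrier
  /-- the map sending a dead-end to its equivalence class -/
  f : LDE → carrier
  le_nabla : ∀ x : carrier, lat.le x nabla
  f_ne_nabla : ∀ G : LDE, G.opts ≠ [] → G.bday ≤ n → f G ≠ nabla
  surj : ∀ x : carrier, x ≠ nabla →
    ∃ G : LDE, G.opts ≠ [] ∧ G.bday ≤ n ∧ f G = x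
  /-- the lattice order is (the reverse of) the dead-end order on classes -/
  le_iff : ∀ G H : LDE, G.opts ≠ [] → G.bday ≤ n → H.opts ≠ [] → H.bday ≤ n →
    (lat.le (f G) (f H) ↔ LDE.Ge H G)
  /-- meet is given by the union of the Right options -/
  inf_eq : ∀ G H : LDE, G.opts ≠ [] → G.bday ≤ n → H.opts ≠ [] → H.bday ≤ n →
    lat.inf (f G) (f H) = f (LDE.node (G.opts ++ H.opts))


/-!
A nonzero dead-end `G` of birthday at most `n` is determined, up to equivalence, by the set
`[G]` of dead-ends of birthday at most `n - 1` lying above one of its Right options: every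
option of a form of `G` of height `≤ n` lies in `[G]`, so `[H] ⊆ [G]` exactly when `G ≤ H`.
Concatenating option lists realises the union `[G] ∪ [H]`, and the game whose options are
representatives of the dead-ends in `[G] ∩ [H]` (finitely many up to equivalence) realises the
intersection. So the sets `[G]`, with `[0] = ∅` playing the role of `∇`, form a sublattice of
the distributive lattice `Set LDE`, and `L_n*` is its order dual.
-/

namespace LDE

@[elab_as_elim]
theorem induction_on {P : LDE → Prop} (G : LDE)
    (node : ∀ l, (∀ g ∈ l, P g) → P (node l)) : P G :=
  match G with
  | .node l => node l fun g _ => induction_on g node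
termination_by sizeOf G
decreasing_by have := List.sizeOf_lt_of_mem ‹g ∈ l›; simp; omega

theorem ge_iff {G H : LDE} :
    Ge G H ↔ (∀ g ∈ G.opts, ∃ h ∈ H.opts, Ge g h) ∧ (G.opts = [] → H.opts = []) := by
  obtain ⟨gs⟩ := G
  obtain ⟨hs⟩ := H
  rw [Ge]
  rfl

theorem ge_refl_s10 (G : LDE) : Ge G G := by
  induction G using induction_on with
  | node l ih => exact ge_iff.2 ⟨fun g hg => ⟨g, hg, ih g hg⟩, id⟩

theorem ge_trans {G H K : LDE} (hGH : Ge G H) (hHK : Ge H K) : Ge G K := by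
  induction G using induction_on generalizing H K with
  | node gs ih =>
    rw [ge_iff] at *
    refine ⟨fun g hg => ?_, hHK.2 ∘ hGH.2⟩
    obtain ⟨h, hh, hgh⟩ := hGH.1 g hg
    obtain ⟨k, hk, hhk⟩ := hHK.1 h hh
    exact ⟨k, hk, ih g hg hgh hhk⟩

instance : Preorder LDE where
  le G H := Ge H G
  le_refl := ge_refl_s10
  le_trans _ _ _ h₁ h₂ := ge_trans h₂ h₁

theorem le_iff {G H : LDE} :
    G ≤ H ↔ (∀ h ∈ H.opts, ∃ g ∈ G.opts, g ≤ h) ∧ (H.opts = [] → G.opts = []) :=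
  ge_iff

theorem opts_ne_nil_of_le {G H : LDE} (h : G ≤ H) (hG : G.opts ≠ []) : H.opts ≠ [] :=
  fun hH => hG ((le_iff.1 h).2 hH)

theorem eqv_refl (G : LDE) : Eqv G G := ⟨ge_refl_s10 G, ge_refl_s10 G⟩

theorem Eqv.ge {G H : LDE} (h : Eqv G H) : G ≥ H := h.1

theorem Eqv.le {G H : LDE} (h : Eqv G H) : G ≤ H := h.2

theorem foldr_max_succ_le_iff {α : Type*} (f : α → ℕ) (l : List α) (m : ℕ) :
    l.foldr (fun a k => max (f a + 1) k) 0 ≤ m ↔ ∀ a ∈ l, f a < m := by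
  induction l with
  | nil => simp
  | cons a l ih => simp [ih]

theorem fb_le_iff {G : LDE} {m : ℕ} : G.fb ≤ m ↔ ∀ g ∈ G.opts, g.fb < m := by
  obtain ⟨l⟩ := G
  rw [fb, foldr_max_succ_le_iff (fun g : {g // g ∈ l} => fb g.1)]
  simp [opts]

theorem fb_lt_of_mem_opts {g G : LDE} (hg : g ∈ G.opts) : g.fb < G.fb :=
  fb_le_iff.1 le_rfl g hg

theorem bday_le_fb_of_eqv {G K : LDE} (h : Eqv K G) : G.bday ≤ K.fb :=
  Nat.sInf_le ⟨K, h, rfl⟩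

theorem bday_le_fb (G : LDE) : G.bday ≤ G.fb :=
  bday_le_fb_of_eqv (eqv_refl G)

theorem bday_le_iff {G : LDE} {m : ℕ} : G.bday ≤ m ↔ ∃ K, Eqv K G ∧ K.fb ≤ m := by
  constructor
  · intro h
    have hne : {k | ∃ K : LDE, Eqv K G ∧ K.fb = k}.Nonempty := ⟨G.fb, G, eqv_refl G, rfl⟩
    obtain ⟨K, hKG, hK⟩ := Nat.sInf_mem hne
    exact ⟨K, hKG, hK.trans_le h⟩
  · rintro ⟨K, hKG, hK⟩
    exact (bday_le_fb_of_eqv hKG).trans hK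

theorem exists_form_of_bday_le {G : LDE} {n : ℕ} (hG : G.opts ≠ []) (hGn : G.bday ≤ n) :
    ∃ K, Eqv K G ∧ K.fb ≤ n ∧ K.opts ≠ [] := by
  obtain ⟨K, hKG, hK⟩ := bday_le_iff.1 hGn
  exact ⟨K, hKG, hK, opts_ne_nil_of_le hKG.ge hG⟩

theorem bday_le_pred_of_mem_opts {g G : LDE} {n : ℕ} (hg : g ∈ G.opts) (hG : G.fb ≤ n) :
    g.bday ≤ n - 1 := by
  have := fb_lt_of_mem_opts hg
  have := bday_le_fb g
  omega

def reps : ℕ → List LDE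
  | 0 => [node []]
  | m + 1 => (reps m).sublists.map node

theorem fb_le_of_mem_reps {m : ℕ} {r : LDE} (hr : r ∈ reps m) : r.fb ≤ m := by
  induction m generalizing r with
  | zero =>
    rw [reps, List.mem_singleton] at hr
    exact fb_le_iff.2 (by simp [hr, opts])
  | succ m ih =>
    simp only [reps, List.mem_map, List.mem_sublists] at hr
    obtain ⟨l, hl, rfl⟩ := hr
    exact fb_le_iff.2 fun g hg => Nat.lt_succ_of_le (ih (hl.subset hg))

noncomputable def ofSet (m : ℕ) (U : Set LDE) : LDE :=
  open Classical in node ((reps m).filter (· ∈ U))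

theorem mem_opts_ofSet {m : ℕ} {U : Set LDE} {r : LDE} :
    r ∈ (ofSet m U).opts ↔ r ∈ reps m ∧ r ∈ U := by
  simp [ofSet, opts]

theorem ofSet_mem_reps (m : ℕ) (U : Set LDE) : ofSet m U ∈ reps (m + 1) :=
  List.mem_map.2 ⟨_, List.mem_sublists.2 List.filter_sublist, rfl⟩

def upperOpts (G : LDE) : UpperSet LDE := upperClosure {g | g ∈ G.opts}

theorem mem_upperOpts {G X : LDE} : X ∈ G.upperOpts ↔ ∃ g ∈ G.opts, g ≤ X :=
  mem_upperClosure

theorem upperOpts_append (G H : LDE) :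
    (node (G.opts ++ H.opts)).upperOpts = G.upperOpts ⊓ H.upperOpts := by
  rw [upperOpts, upperOpts, upperOpts, ← upperClosure_union]
  congr 1
  ext
  simp [opts]

theorem exists_mem_reps_eqv (m : ℕ) {G : LDE} (hG : G.fb ≤ m) : ∃ r ∈ reps m, Eqv r G := by
  induction m generalizing G with
  | zero =>
    obtain ⟨gs⟩ := G
    obtain rfl : gs = [] := List.eq_nil_iff_forall_not_mem.2 fun g hg =>
      (fb_le_iff.1 hG g hg).not_ge (Nat.zero_le _)
    exact ⟨node [], List.mem_singleton_self _, eqv_refl _⟩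
  | succ m ih =>
    set R := ofSet m G.upperOpts
    have hrep : ∀ g ∈ G.opts, ∃ r ∈ R.opts, Eqv r g := fun g hg => by
      obtain ⟨r, hr, hrg⟩ := ih (Nat.le_of_lt_succ ((fb_lt_of_mem_opts hg).trans_le hG))
      exact ⟨r, mem_opts_ofSet.2 ⟨hr, mem_upperOpts.2 ⟨g, hg, hrg.ge⟩⟩, hrg⟩
    have hopts : ∀ r ∈ R.opts, ∃ g ∈ G.opts, g ≤ r := fun r hr =>
      mem_upperOpts.1 (mem_opts_ofSet.1 hr).2
    refine ⟨R, ofSet_mem_reps m _, le_iff.2 ⟨hopts, fun h => ?_⟩,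
      le_iff.2 ⟨fun g hg => ?_, fun h => ?_⟩⟩
    · refine List.eq_nil_iff_forall_not_mem.2 fun g hg => ?_
      obtain ⟨r, hr, -⟩ := hrep g hg
      simp [h] at hr
    · obtain ⟨r, hr, hrg⟩ := hrep g hg
      exact ⟨r, hr, hrg.le⟩
    · refine List.eq_nil_iff_forall_not_mem.2 fun r hr => ?_
      obtain ⟨g, hg, -⟩ := hopts r hr
      simp [h] at hg

/-- The paper's `[G]`; meaningful for `n ≥ 1`, as `n - 1` truncates at `n = 0`. -/
def rightSet (n : ℕ) (G : LDE) : Set LDE :=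
  ↑G.upperOpts ∩ {X | X.bday ≤ n - 1}

theorem mem_rightSet {n : ℕ} {G X : LDE} :
    X ∈ rightSet n G ↔ (∃ g ∈ G.opts, g ≤ X) ∧ X.bday ≤ n - 1 := by
  rw [rightSet, Set.mem_inter_iff, SetLike.mem_coe, mem_upperOpts]
  rfl

theorem rightSet_antitone (n : ℕ) : Antitone (rightSet n) := fun G H hGH X hX => by
  obtain ⟨⟨h, hh, hhX⟩, hX⟩ := mem_rightSet.1 hX
  obtain ⟨g, hg, hgh⟩ := (le_iff.1 hGH).1 h hh
  exact mem_rightSet.2 ⟨⟨g, hg, hgh.trans hhX⟩, hX⟩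

theorem rightSet_node_nil (n : ℕ) : rightSet n (node []) = ∅ := by
  simp [rightSet, upperOpts, opts]

theorem rightSet_append (n : ℕ) (G H : LDE) :
    rightSet n (node (G.opts ++ H.opts)) = rightSet n G ∪ rightSet n H := by
  rw [rightSet, upperOpts_append, UpperSet.coe_inf, Set.union_inter_distrib_right]
  rfl

theorem rightSet_ofSet {n : ℕ} (U : UpperSet LDE) :
    rightSet n (ofSet (n - 1) U) = ↑U ∩ {X | X.bday ≤ n - 1} := by
  ext X
  rw [mem_rightSet]
  constructor
  · rintro ⟨⟨r, hr, hrX⟩, hX⟩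
    exact ⟨U.upper hrX (mem_opts_ofSet.1 hr).2, hX⟩
  · rintro ⟨hXU, hX⟩
    obtain ⟨K, hKX, hK⟩ := bday_le_iff.1 hX
    obtain ⟨r, hr, hrK⟩ := exists_mem_reps_eqv (n - 1) hK
    have hrU : r ∈ U := U.upper (hKX.ge.trans hrK.ge) hXU
    exact ⟨⟨r, mem_opts_ofSet.2 ⟨hr, hrU⟩, hrK.le.trans hKX.le⟩, hX⟩

theorem exists_rightSet_eq_inter (n : ℕ) (G H : LDE) :
    ∃ K, rightSet n K = rightSet n G ∩ rightSet n H := by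
  refine ⟨ofSet (n - 1) ↑(G.upperOpts ⊔ H.upperOpts), ?_⟩
  rw [rightSet_ofSet, UpperSet.coe_sup, Set.inter_inter_distrib_right]
  rfl

theorem exists_rightSet_eq_of_nonempty {n : ℕ} (hn : 1 ≤ n) {G : LDE}
    (hG : (rightSet n G).Nonempty) :
    ∃ K, K.opts ≠ [] ∧ K.bday ≤ n ∧ rightSet n K = rightSet n G := by
  set K := ofSet (n - 1) G.upperOpts
  have hK : rightSet n K = rightSet n G := rightSet_ofSet _
  refine ⟨K, fun h => ?_, ?_, hK⟩
  · rw [← hK, show K = node [] from congrArg node h, rightSet_node_nil] at hG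
    exact Set.not_nonempty_empty hG
  · have := fb_le_of_mem_reps (ofSet_mem_reps (n - 1) G.upperOpts)
    rw [Nat.sub_add_cancel hn] at this
    exact (bday_le_fb K).trans this

theorem rightSet_nonempty {n : ℕ} {G : LDE} (hG : G.opts ≠ []) (hGn : G.bday ≤ n) :
    (rightSet n G).Nonempty := by
  obtain ⟨K, hKG, hK, hKne⟩ := exists_form_of_bday_le hG hGn
  obtain ⟨k, hk⟩ := List.exists_mem_of_ne_nil _ hKne
  obtain ⟨g, hg, hgk⟩ := (le_iff.1 hKG.ge).1 k hk
  exact ⟨k, mem_rightSet.2 ⟨⟨g, hg, hgk⟩, bday_le_pred_of_mem_opts hk hK⟩⟩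

theorem rightSet_subset_rightSet_iff {n : ℕ} {G H : LDE} (hH : H.opts ≠ [])
    (hHn : H.bday ≤ n) : rightSet n H ⊆ rightSet n G ↔ G ≤ H := by
  refine ⟨fun hHG => ?_, fun hGH => rightSet_antitone n hGH⟩
  obtain ⟨K, hKH, hK, hKne⟩ := exists_form_of_bday_le hH hHn
  refine le_trans (le_iff.2 ⟨fun k hk => ?_, fun h => absurd h hKne⟩) hKH.le
  have hkK : k ∈ rightSet n K :=
    mem_rightSet.2 ⟨⟨k, hk, le_rfl⟩, bday_le_pred_of_mem_opts hk hK⟩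
  exact (mem_rightSet.1 (hHG (rightSet_antitone n hKH.ge hkK))).1

def rightSets (n : ℕ) : Sublattice (Set LDE) where
  carrier := Set.range (rightSet n)
  supClosed' := by
    rintro _ ⟨G, rfl⟩ _ ⟨H, rfl⟩
    exact ⟨_, rightSet_append n G H⟩
  infClosed' := by
    rintro _ ⟨G, rfl⟩ _ ⟨H, rfl⟩
    exact exists_rightSet_eq_inter n G H

end LDE

open LDE OrderDual

/-- for each `n ≥ 1`, `L_n*` is a distributive lattice with meet
given by union of Right options. -/
theorem stmt10 (n : ℕ) (hn : 1 ≤ n) :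
    Nonempty (DistribLatticeRealization n) := by
  refine ⟨{ carrier := (rightSets n)ᵒᵈ
            nabla := toDual ⟨∅, node [], rightSet_node_nil n⟩
            f := fun G => toDual ⟨rightSet n G, G, rfl⟩
            le_nabla := fun _ => Set.empty_subset _
            f_ne_nabla := fun G hG hGn h => ?_
            surj := ?_
            le_iff := fun G H _ _ hH hHn => rightSet_subset_rightSet_iff hH hHn
            inf_eq := fun G H _ _ _ _ => Subtype.ext (rightSet_append n G H).symm }⟩
  · exact (rightSet_nonempty hG hGn).ne_empty (congrArg (Subtype.val ∘ ofDual) h)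
  · rintro ⟨_, G, rfl⟩ hx
    obtain ⟨K, hK, hKn, hKG⟩ := exists_rightSet_eq_of_nonempty hn
      (Set.nonempty_iff_ne_empty.2 fun h => hx (congrArg toDual (Subtype.ext h)))
    exact ⟨K, hK, hKn, congrArg toDual (Subtype.ext hKG)⟩
end
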